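/- arXiv:2602.04440 — 2 statements merged into one kernel-verified Lean document; each statement's English description precedes it below -/
import Mathlib

section
/- Assume the labels are pairwise coprime. Then Q = (∏_{i} m i) · (∏_{e ∈ E(G)} r e) divides the determinant |F_1, …, F_n| for every choice of splines F_1, …, F_n ∈ R̂_G. -/
/-- A spline on the edge-labeled graph `(G, m, r)`: a vertex labeling `f` such that
`m i ∣ f i` at each vertex `i` and `r e ∣ f u - f v` for each edge `e = s(u, v)` of `G`. -/
def IsSpline {R : Type*} [CommRing R] {n : ℕ} (G : SimpleGraph (Fin n))
    (m : Fin n → R) (r : Sym2 (Fin n) → R) (f : Fin n → R) : Prop :=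
  (∀ i, m i ∣ f i) ∧ ∀ u v, G.Adj u v → r s(u, v) ∣ f u - f v

/-- If `c` divides every entry of row `i` of `M`, then `c` divides `det M`. -/
lemma row_dvd_det' {R : Type*} [CommRing R] {n : ℕ} (M : Matrix (Fin n) (Fin n) R)
    (i : Fin n) (c : R) (h : ∀ j, c ∣ M i j) : c ∣ M.det := by
  choose g hg using h
  have hM : M = M.updateRow i (c • g) := by
    ext a b
    rcases eq_or_ne a i with rfl | hne
    · simp [Matrix.updateRow_self, (hg b).symm]
    · simp [Matrix.updateRow_ne hne]
  rw [hM, Matrix.det_updateRow_smul]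
  exact Dvd.intro _ rfl

/-- Product of pairwise relatively prime common divisors divides. -/
lemma prod_dvd_of_pairwise_relPrime {R : Type*} [CommRing R] [IsDomain R] [GCDMonoid R]
    {ι : Type*} [DecidableEq ι] (t : Finset ι) (s : ι → R) (x : R)
    (hp : ∀ a ∈ t, ∀ b ∈ t, a ≠ b → IsRelPrime (s a) (s b))
    (h : ∀ i ∈ t, s i ∣ x) : (∏ i ∈ t, s i) ∣ x := by
  induction t using Finset.induction with
  | empty => simp
  | @insert a t' ha ih =>
    rw [Finset.prod_insert ha]
    have hrp : IsRelPrime (s a) (∏ i ∈ t', s i) :=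
      IsRelPrime.prod_right fun i hi =>
        hp a (Finset.mem_insert_self a t') i (Finset.mem_insert_of_mem hi)
          (by rintro rfl; exact ha hi)
    exact hrp.mul_dvd (h a (Finset.mem_insert_self a t'))
      (ih (fun b hb c hc hbc => hp b (Finset.mem_insert_of_mem hb)
        c (Finset.mem_insert_of_mem hc) hbc)
        (fun i hi => h i (Finset.mem_insert_of_mem hi)))

/-- If the vertex labels `m i` and the edge labels `r e` (`e` an edge of
`G`) are all nonzero and pairwise relatively prime, then
`Q = (∏ i, m i) * (∏ e ∈ E(G), r e)` divides the determinant `|F_1, …, F_n|` for every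
choice of splines `F 1, …, F n`. -/
theorem Q_dvd_det {R : Type*} [CommRing R] [IsDomain R] [GCDMonoid R]
    {n : ℕ} (hn : 1 ≤ n)
    (G : SimpleGraph (Fin n)) [DecidableRel G.Adj]
    (m : Fin n → R) (r : Sym2 (Fin n) → R)
    (hm0 : ∀ i, m i ≠ 0) (hr0 : ∀ e ∈ G.edgeSet, r e ≠ 0)
    (hmm : ∀ i j, i ≠ j → IsRelPrime (m i) (m j))
    (hmr : ∀ i, ∀ e ∈ G.edgeSet, IsRelPrime (m i) (r e))
    (hrr : ∀ e ∈ G.edgeSet, ∀ e' ∈ G.edgeSet, e ≠ e' → IsRelPrime (r e) (r e'))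
    (F : Fin n → Fin n → R) (hF : ∀ j, IsSpline G m r (F j)) :
    (∏ i, m i) * (∏ e ∈ G.edgeFinset, r e) ∣ (Matrix.of fun i j => F j i).det := by
  set M : Matrix (Fin n) (Fin n) R := Matrix.of fun i j => F j i with hMdef
  have hmdvd : ∀ i, m i ∣ M.det := fun i =>
    row_dvd_det' M i (m i) (fun j => (hF j).1 i)
  have hrdvd : ∀ e ∈ G.edgeFinset, r e ∣ M.det := by
    intro e he
    induction e using Sym2.ind with
    | _ u v =>
      rw [SimpleGraph.mem_edgeFinset, SimpleGraph.mem_edgeSet] at he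
      have huv : u ≠ v := he.ne
      rw [← Matrix.det_updateRow_add_smul_self M huv (-1 : R)]
      refine row_dvd_det' _ u _ fun j => ?_
      have hd := (hF j).2 u v he
      simp only [Matrix.updateRow_self, Pi.add_apply, Pi.smul_apply, smul_eq_mul,
        neg_one_mul, hMdef, Matrix.of_apply]
      simpa [sub_eq_add_neg] using hd
  have h1 : (∏ i, m i) ∣ M.det :=
    prod_dvd_of_pairwise_relPrime Finset.univ m M.det
      (fun a _ b _ hab => hmm a b hab) (fun i _ => hmdvd i)
  have h2 : (∏ e ∈ G.edgeFinset, r e) ∣ M.det :=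
    prod_dvd_of_pairwise_relPrime G.edgeFinset r M.det
      (fun a ha b hb hab => hrr a (SimpleGraph.mem_edgeFinset.mp ha)
        b (SimpleGraph.mem_edgeFinset.mp hb) hab) hrdvd
  have hrp : IsRelPrime (∏ i, m i) (∏ e ∈ G.edgeFinset, r e) :=
    IsRelPrime.prod_left fun i _ =>
      IsRelPrime.prod_right fun e he => hmr i e (SimpleGraph.mem_edgeFinset.mp he)
  exact hrp.mul_dvd h1 h2
end

section
/- Let n ≥ 1 and let a_1, …, a_n, b_1, …, b_n ∈ R. Then there exists x ∈ R with b_i ∣ x − a_i for all i = 1, …, n if and only if gcd(b_i, b_j) ∣ a_i − a_j for all i ≠ j. Moreover, if x and x' both satisfy b_i ∣ x − a_i for all i, then lcm(b_1, …, b_n) divides x − x'. -/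
/-!
Necessity and uniqueness are immediate. For existence, induct on the number of congruences: if
`y` solves the first ones and `L` is the lcm of their moduli, then `y + L * t` still solves them,
and by Bézout some `t` makes `b ∣ y + L * t - a` as soon as `gcd b L ∣ a - y`. The pairwise
conditions give `gcd b (b j) ∣ a - y` for each earlier modulus `b j`, and these combine to
`gcd b L ∣ a - y` because `gcd` distributes over `lcm`, which is seen on prime factorizations.
-/

namespace Associates

variable {α : Type*} [CommMonoidWithZero α] [UniqueFactorizationMonoid α]

open scoped Classical in
theorem inf_sup_le_sup_inf [Nontrivial α] (a b c : Associates α) :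
    a ⊓ (b ⊔ c) ≤ a ⊓ b ⊔ a ⊓ c := by
  rw [← factors_le]
  -- `⊓` and `⊔` are computed on factor sets, which form a distributive lattice
  change (a.factors ⊓ (b.factors ⊔ c.factors).prod.factors).prod.factors ≤
    ((a.factors ⊓ b.factors).prod.factors ⊔ (a.factors ⊓ c.factors).prod.factors).prod.factors
  simp only [prod_factors, inf_sup_left, le_refl]

variable [GCDMonoid α]

theorem mk_gcd (a b : α) : Associates.mk (gcd a b) = .mk a ⊓ .mk b :=
  le_antisymm (le_inf (mk_le_mk_of_dvd (gcd_dvd_left a b)) (mk_le_mk_of_dvd (gcd_dvd_right a b)))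
    (by
      rw [← gcd_mk_mk]
      exact dvd_gcd (inf_le_left (b := Associates.mk b)) (inf_le_right (a := Associates.mk a)))

theorem mk_lcm (a b : α) : Associates.mk (lcm a b) = .mk a ⊔ .mk b :=
  le_antisymm
    (by
      rw [← lcm_mk_mk]
      exact lcm_dvd (le_sup_left (b := Associates.mk b)) (le_sup_right (a := Associates.mk a)))
    (sup_le (mk_le_mk_of_dvd (dvd_lcm_left a b)) (mk_le_mk_of_dvd (dvd_lcm_right a b)))

end Associates

section GCDMonoid

variable {α : Type*} [CommMonoidWithZero α] [GCDMonoid α]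

theorem List.foldr_lcm_dvd_iff {l : List α} {m : α} :
    l.foldr lcm 1 ∣ m ↔ ∀ r ∈ l, r ∣ m := by
  induction l with
  | nil => simp
  | cons r l ih => simp [lcm_dvd_iff, ih]

theorem List.dvd_foldr_lcm {l : List α} {r : α} (h : r ∈ l) : r ∣ l.foldr lcm 1 :=
  List.foldr_lcm_dvd_iff.mp dvd_rfl r h

theorem gcd_lcm_dvd_lcm_gcd [UniqueFactorizationMonoid α] (a b c : α) :
    gcd a (lcm b c) ∣ lcm (gcd a b) (gcd a c) := by
  nontriviality α
  rw [← Associates.mk_le_mk_iff_dvd, Associates.mk_gcd, Associates.mk_lcm, Associates.mk_lcm,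
    Associates.mk_gcd, Associates.mk_gcd]
  exact Associates.inf_sup_le_sup_inf _ _ _

theorem gcd_foldr_lcm_dvd [UniqueFactorizationMonoid α] {a m : α} {l : List α}
    (h : ∀ r ∈ l, gcd a r ∣ m) : gcd a (l.foldr lcm 1) ∣ m := by
  induction l with
  | nil => exact (gcd_dvd_right a 1).trans (one_dvd m)
  | cons r l ih =>
    simp only [List.mem_cons, forall_eq_or_imp] at h
    exact (gcd_lcm_dvd_lcm_gcd a r _).trans (lcm_dvd h.1 (ih h.2))

end GCDMonoid

section PID

variable {R : Type*} [CommRing R] [IsDomain R] [GCDMonoid R]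

theorem exists_dvd_add_mul_sub [IsBezout R] {b L a y : R} (h : gcd b L ∣ a - y) :
    ∃ t, b ∣ y + L * t - a := by
  obtain ⟨s, t, hst⟩ := (gcd_dvd_iff_exists b L).mp h
  exact ⟨t, ⟨-s, by linear_combination -hst⟩⟩

theorem exists_forall_dvd_sub_of_forall_gcd_dvd [IsPrincipalIdealRing R] {ι : Type*}
    (a b : ι → R) (h : ∀ i j, gcd (b i) (b j) ∣ a i - a j) (l : List ι) :
    ∃ x, ∀ i ∈ l, b i ∣ x - a i := by
  induction l with
  | nil => exact ⟨0, by simp⟩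
  | cons i l ih =>
    obtain ⟨y, hy⟩ := ih
    set L := (l.map b).foldr lcm 1
    have hL : gcd (b i) L ∣ a i - y := by
      refine gcd_foldr_lcm_dvd fun r hr => ?_
      obtain ⟨j, hj, rfl⟩ := List.mem_map.mp hr
      have := dvd_sub (h i j) ((gcd_dvd_right _ _).trans (hy j hj))
      rwa [sub_sub_sub_cancel_right] at this
    obtain ⟨t, ht⟩ := exists_dvd_add_mul_sub hL
    refine ⟨y + L * t, List.forall_mem_cons.mpr ⟨ht, fun j hj => ?_⟩⟩
    rw [add_sub_right_comm]
    exact dvd_add (hy j hj) ((List.dvd_foldr_lcm (List.mem_map_of_mem hj)).mul_right t)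

end PID

theorem crt_pid_general {R : Type*} [CommRing R] [IsDomain R] [IsPrincipalIdealRing R]
    [GCDMonoid R] {n : ℕ} (a b : Fin n → R) :
    ((∃ x : R, ∀ i, b i ∣ x - a i) ↔
      ∀ i j, i ≠ j → gcd (b i) (b j) ∣ a i - a j) ∧
    (∀ x x' : R, (∀ i, b i ∣ x - a i) → (∀ i, b i ∣ x' - a i) →
      ((List.ofFn b).foldr lcm 1) ∣ x - x') := by
  refine ⟨⟨fun ⟨x, hx⟩ i j _ => ?_, fun h => ?_⟩, fun x x' hx hx' => ?_⟩
  · rw [← sub_sub_sub_cancel_left (a j) (a i) x]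
    exact dvd_sub ((gcd_dvd_right _ _).trans (hx j)) ((gcd_dvd_left _ _).trans (hx i))
  · have hpair : ∀ i j, gcd (b i) (b j) ∣ a i - a j := fun i j => by
      rcases eq_or_ne i j with rfl | hij
      · simp
      · exact h i j hij
    obtain ⟨x, hx⟩ := exists_forall_dvd_sub_of_forall_gcd_dvd a b hpair (List.finRange n)
    exact ⟨x, fun i => hx i (List.mem_finRange i)⟩
  · refine List.foldr_lcm_dvd_iff.mpr fun r hr => ?_
    obtain ⟨i, rfl⟩ := List.mem_ofFn.mp hr
    rw [← sub_sub_sub_cancel_right x x' (a i)]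
    exact dvd_sub (hx i) (hx' i)

/-- Chinese Remainder Theorem over a PID. Let `n ≥ 1` and
`a b : Fin n → R` with `R` a principal ideal domain. There exists `x` with
`b i ∣ x - a i` for all `i` if and only if `gcd (b i) (b j) ∣ a i - a j` for all
`i ≠ j`; moreover any two solutions `x, x'` satisfy
`lcm(b_1, …, b_n) ∣ x - x'`, the lcm being the iterated binary lcm. -/
theorem crt_pid {R : Type*} [CommRing R] [IsDomain R] [IsPrincipalIdealRing R]
    [GCDMonoid R] {n : ℕ} (hn : 1 ≤ n) (a b : Fin n → R) :
    ((∃ x : R, ∀ i, b i ∣ x - a i) ↔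
      ∀ i j, i ≠ j → gcd (b i) (b j) ∣ a i - a j) ∧
    (∀ x x' : R, (∀ i, b i ∣ x - a i) → (∀ i, b i ∣ x' - a i) →
      ((List.ofFn b).foldr lcm 1) ∣ x - x') :=
  crt_pid_general a b
end
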